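/- Let f : X → X be a homeomorphism of a compact metric space with shadowing on X, and let C be a chain component of f. Then C is not an initial chain component if and only if there exists an attractor Λ for f with C ⊆ ∂Λ. -/

import Mathlib

open Metric Filter Topology Set

variable {X : Type*}

/-- `(c i)_{i=0}^k` is a `δ`-chain of `f` (up to index `k`). -/
def IsDeltaChain [MetricSpace X] (f : X → X) (δ : ℝ) (k : ℕ) (c : ℕ → X) : Prop :=
  ∀ i < k, dist (f (c i)) (c (i + 1)) ≤ δ

/-- `x → y` : for every `δ > 0` there is a `δ`-chain from `x` to `y`. -/
def ChainReach [MetricSpace X] (f : X → X) (x y : X) : Prop :=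
  ∀ δ > 0, ∃ k ≥ 1, ∃ c : ℕ → X, c 0 = x ∧ c k = y ∧ IsDeltaChain f δ k c

/-- The chain recurrent set. -/
def ChainRec [MetricSpace X] (f : X → X) : Set X := {x | ChainReach f x x}

/-- `C` is a chain component of `f`. -/
def IsChainComponent [MetricSpace X] (f : X → X) (C : Set X) : Prop :=
  ∃ x, ChainReach f x x ∧
    C = {y | ChainReach f y y ∧ ChainReach f x y ∧ ChainReach f y x}

/-- A set is chain stable iff points chain-reachable from it stay in it. -/
def ChainStable [MetricSpace X] (f : X → X) (S : Set X) : Prop :=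
  ∀ x ∈ S, ∀ y, ChainReach f x y → y ∈ S

/-- `S` is "initially stable": if `y → x` with `x ∈ S` then `y ∈ S`. -/
def InitialStable [MetricSpace X] (f : X → X) (S : Set X) : Prop :=
  ∀ x ∈ S, ∀ y, ChainReach f y x → y ∈ S

/-- `f` restricted to `Λ` is chain transitive. -/
def ChainTransitiveOn [MetricSpace X] (f : X → X) (Λ : Set X) : Prop :=
  ∀ p ∈ Λ, ∀ q ∈ Λ, ∀ δ > 0, ∃ k ≥ 1, ∃ c : ℕ → X,
    c 0 = p ∧ c k = q ∧ (∀ i ≤ k, c i ∈ Λ) ∧ IsDeltaChain f δ k c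

/-- `f` has shadowing on `S`. -/
def ShadowsOn [MetricSpace X] (f : X → X) (S : Set X) : Prop :=
  ∀ ε > 0, ∃ δ > 0, ∀ (k : ℕ) (c : ℕ → X), (∀ i ≤ k, c i ∈ S) →
    IsDeltaChain f δ k c → ∃ x, ∀ i ≤ k, dist (c i) (f^[i] x) ≤ ε

/-- Iterate of a homeomorphism indexed by `ℤ`. -/
def hIter [TopologicalSpace X] (f : X ≃ₜ X) (i : ℤ) : X → X :=
  if 0 ≤ i then (⇑f)^[i.toNat] else (⇑f.symm)^[(-i).toNat]

/-- A `δ`-limit-pseudo orbit of the homeomorphism `f`. -/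
def IsLimitPseudoOrbit [MetricSpace X] (f : X ≃ₜ X) (δ : ℝ) (ξ : ℤ → X) : Prop :=
  (∀ i : ℤ, dist (f (ξ i)) (ξ (i + 1)) ≤ δ) ∧
  Tendsto (fun i : ℤ => dist (f (ξ i)) (ξ (i + 1))) atBot (nhds 0) ∧
  Tendsto (fun i : ℤ => dist (f (ξ i)) (ξ (i + 1))) atTop (nhds 0)

/-- `f` has L-shadowing on `S`. -/
def LShadowsOn [MetricSpace X] (f : X ≃ₜ X) (S : Set X) : Prop :=
  ∀ ε > 0, ∃ δ > 0, ∀ ξ : ℤ → X, (∀ i : ℤ, ξ i ∈ S) →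
    IsLimitPseudoOrbit f δ ξ →
    ∃ x : X, (∀ i : ℤ, dist (ξ i) (hIter f i x) ≤ ε) ∧
      Tendsto (fun i : ℤ => dist (ξ i) (hIter f i x)) atBot (nhds 0) ∧
      Tendsto (fun i : ℤ => dist (ξ i) (hIter f i x)) atTop (nhds 0)

/-- `f` is expansive on `S`. -/
def ExpansiveOn [MetricSpace X] (f : X ≃ₜ X) (S : Set X) : Prop :=
  ∃ e > 0, ∀ x y : X, (∀ i : ℤ, hIter f i x ∈ S) → (∀ i : ℤ, hIter f i y ∈ S) →
    (∀ i : ℤ, dist (hIter f i x) (hIter f i y) ≤ e) → x = y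

/-- Closed `b`-neighborhood of `S`. -/
def Nbhd [MetricSpace X] (b : ℝ) (S : Set X) : Set X := {x | Metric.infDist x S ≤ b}

/-- Attractor for a continuous map `f`. -/
def IsAttractor [TopologicalSpace X] (f : X → X) (Λ : Set X) : Prop :=
  IsClosed Λ ∧ f '' Λ = Λ ∧
    ∃ U : Set X, IsOpen U ∧ f '' closure U ⊆ U ∧ Λ = ⋂ i : ℕ, f^[i] '' U

/-- `f` is (topologically) mixing. -/
def IsMixing [TopologicalSpace X] (f : X → X) : Prop :=
  ∀ U V : Set X, IsOpen U → IsOpen V → U.Nonempty → V.Nonempty →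
    ∃ j : ℕ, ∀ i ≥ j, (f^[i] '' U ∩ V).Nonempty

/-- The ω-limit set of `x` under `f`. -/
def OmegaSet [TopologicalSpace X] (f : X → X) (x : X) : Set X :=
  {y | ∃ φ : ℕ → ℕ, StrictMono φ ∧ Tendsto (fun j => f^[φ j] x) atTop (nhds y)}

/-- `M` is a minimal set for `f`. -/
def IsMinimalSet [TopologicalSpace X] (f : X → X) (M : Set X) : Prop :=
  M.Nonempty ∧ IsClosed M ∧ f '' M ⊆ M ∧ ∀ x ∈ M, OmegaSet f x = M

section Aux

variable [MetricSpace X]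

lemma reach_concat {f : X → X} {a b c : X} (h1 : ChainReach f a b)
    (h2 : ChainReach f b c) : ChainReach f a c := by
  intro δ hδ
  obtain ⟨k1, hk1, c1, hc10, hc1k, hch1⟩ := h1 δ hδ
  obtain ⟨k2, hk2, c2, hc20, hc2k, hch2⟩ := h2 δ hδ
  refine ⟨k1 + k2, by omega, fun i => if i ≤ k1 then c1 i else c2 (i - k1), ?_, ?_, ?_⟩
  · show (if 0 ≤ k1 then c1 0 else c2 (0 - k1)) = a
    rw [if_pos (Nat.zero_le _), hc10]
  · show (if k1 + k2 ≤ k1 then c1 (k1 + k2) else c2 (k1 + k2 - k1)) = c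
    rw [if_neg (show ¬ k1 + k2 ≤ k1 from by omega),
      show k1 + k2 - k1 = k2 from by omega, hc2k]
  · intro i hi
    show dist (f (if i ≤ k1 then c1 i else c2 (i - k1)))
      (if i + 1 ≤ k1 then c1 (i+1) else c2 (i + 1 - k1)) ≤ δ
    by_cases h : i < k1
    · rw [if_pos (show i ≤ k1 from h.le), if_pos (show i + 1 ≤ k1 from h)]
      exact hch1 i h
    · push_neg at h
      have hv1 : (if i ≤ k1 then c1 i else c2 (i - k1)) = c2 (i - k1) := by
        by_cases h' : i ≤ k1
        · have hik : i = k1 := le_antisymm h' h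
          rw [if_pos h', hik, hc1k, ← hc20, Nat.sub_self]
        · rw [if_neg h']
      have hv2 : (if i + 1 ≤ k1 then c1 (i+1) else c2 (i + 1 - k1)) = c2 (i - k1 + 1) := by
        rw [if_neg (show ¬ i + 1 ≤ k1 from by omega),
          show i + 1 - k1 = i - k1 + 1 from by omega]
      rw [hv1, hv2]
      exact hch2 (i - k1) (by omega)

lemma reach_apply (f : X → X) (a : X) : ChainReach f a (f a) := by
  intro δ hδ
  refine ⟨1, le_refl 1, fun i => if i = 0 then a else f a, by simp, by simp, ?_⟩
  intro i hi
  interval_cases i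
  show dist (f (if (0:ℕ) = 0 then a else f a)) (if (1:ℕ) = 0 then a else f a) ≤ δ
  rw [if_pos rfl, if_neg one_ne_zero]
  simp [hδ.le]

variable [CompactSpace X]

lemma reach_map {f : X → X} (hf : Continuous f) {a b : X}
    (h : ChainReach f a b) : ChainReach f (f a) (f b) := by
  intro δ hδ
  obtain ⟨δ', hδ', hδ'imp⟩ := Metric.uniformContinuous_iff.mp
    (CompactSpace.uniformContinuous_of_continuous hf) δ hδ
  obtain ⟨k, hk, c, hc0, hck, hch⟩ := h (δ'/2) (by positivity)
  refine ⟨k, hk, fun i => f (c i), by simp [hc0], by simp [hck], fun i hi => ?_⟩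
  exact (hδ'imp (lt_of_le_of_lt (hch i hi) (by linarith))).le

lemma reach_apply_self {f : X → X} (hf : Continuous f) {b : X}
    (h : ChainReach f b b) : ChainReach f (f b) b := by
  intro δ hδ
  obtain ⟨δ', hδ', hδ'imp⟩ := Metric.uniformContinuous_iff.mp
    (CompactSpace.uniformContinuous_of_continuous hf) (δ/2) (by positivity)
  obtain ⟨k, hk, c, hc0, hck, hch⟩ := h (min (δ/2) (δ'/2)) (by positivity)
  rcases eq_or_lt_of_le hk with hk1 | hk2
  · have hck1 : c 1 = b := by rw [← hk1] at hck; exact hck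
    have hd : dist (f b) b ≤ min (δ/2) (δ'/2) := by
      have h1 := hch 0 (by omega)
      rwa [hc0, hck1] at h1
    refine ⟨1, le_refl 1, fun i => if i = 0 then f b else b, by simp, by simp, ?_⟩
    intro i hi
    interval_cases i
    show dist (f (if (0:ℕ) = 0 then f b else b)) (if (1:ℕ) = 0 then f b else b) ≤ δ
    rw [if_pos rfl, if_neg one_ne_zero]
    have h2 : dist (f (f b)) (f b) < δ/2 :=
      hδ'imp (lt_of_le_of_lt hd (lt_of_le_of_lt (min_le_right _ _) (by linarith)))
    calc dist (f (f b)) b ≤ dist (f (f b)) (f b) + dist (f b) b := dist_triangle _ _ _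
    _ ≤ δ/2 + δ/2 := by
        have := hd.trans (min_le_left _ _)
        linarith
    _ = δ := by ring
  · refine ⟨k - 1, by omega, fun i => if i = 0 then f b else c (i+1), ?_, ?_, ?_⟩
    · show (if (0:ℕ) = 0 then f b else c 1) = f b
      rw [if_pos rfl]
    · show (if k - 1 = 0 then f b else c (k - 1 + 1)) = b
      rw [if_neg (show ¬ k - 1 = 0 from by omega), show k - 1 + 1 = k from by omega, hck]
    · intro i hi
      by_cases h0 : i = 0
      · subst h0
        show dist (f (if (0:ℕ) = 0 then f b else c 1)) (if (1:ℕ) = 0 then f b else c 2) ≤ δ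
        rw [if_pos rfl, if_neg one_ne_zero]
        have h1 : dist (f b) (c 1) ≤ min (δ/2) (δ'/2) := by
          have := hch 0 (by omega); rwa [hc0] at this
        have h2 : dist (f (f b)) (f (c 1)) < δ/2 :=
          hδ'imp (lt_of_le_of_lt h1 (lt_of_le_of_lt (min_le_right _ _) (by linarith)))
        have h3 : dist (f (c 1)) (c 2) ≤ δ/2 :=
          le_trans (hch 1 (by omega)) (min_le_left _ _)
        calc dist (f (f b)) (c 2) ≤ dist (f (f b)) (f (c 1)) + dist (f (c 1)) (c 2) :=
              dist_triangle _ _ _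
        _ ≤ δ := by linarith
      · show dist (f (if i = 0 then f b else c (i+1))) (if i + 1 = 0 then f b else c (i+1+1)) ≤ δ
        rw [if_neg h0, if_neg (show ¬ i + 1 = 0 from by omega)]
        exact le_trans (hch (i+1) (by omega)) (le_trans (min_le_left _ _) (by linarith))

lemma reach_symm (f : X ≃ₜ X) {a b : X} (h : ChainReach ⇑f a b) :
    ChainReach ⇑f.symm b a := by
  intro δ hδ
  obtain ⟨δ', hδ', hδ'imp⟩ := Metric.uniformContinuous_iff.mp
    (CompactSpace.uniformContinuous_of_continuous f.symm.continuous) δ hδ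
  obtain ⟨k, hk, c, hc0, hck, hch⟩ := h (δ'/2) (by positivity)
  refine ⟨k, hk, fun j => c (k - j), ?_, ?_, ?_⟩
  · show c (k - 0) = b
    rw [Nat.sub_zero, hck]
  · show c (k - k) = a
    rw [Nat.sub_self, hc0]
  · intro j hj
    show dist (f.symm (c (k - j))) (c (k - (j+1))) ≤ δ
    have hi : k - j = (k - (j+1)) + 1 := by omega
    have hilt : k - (j+1) < k := by omega
    have h1 := hδ'imp (lt_of_le_of_lt (hch _ hilt) (by linarith))
    rw [f.symm_apply_apply] at h1
    rw [hi, dist_comm]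
    exact h1.le

end Aux

/-- Points reachable from `a` by a strict `δ`-chain of `h`. -/
def SChain [MetricSpace X] (h : X → X) (δ : ℝ) (a : X) : Set X :=
  {z | ∃ k, 1 ≤ k ∧ ∃ c : ℕ → X, c 0 = a ∧ c k = z ∧ ∀ i < k, dist (h (c i)) (c (i + 1)) < δ}

section Aux2
variable [MetricSpace X]

lemma SChain_open (h : X → X) (δ : ℝ) (a : X) : IsOpen (SChain h δ a) := by
  rw [Metric.isOpen_iff]
  rintro z ⟨k, hk, c, hc0, hck, hch⟩
  have hlast : dist (h (c (k-1))) z < δ := by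
    have := hch (k-1) (by omega)
    rwa [show k - 1 + 1 = k from by omega, hck] at this
  refine ⟨δ - dist (h (c (k-1))) z, by linarith, ?_⟩
  intro z' hz'
  rw [mem_ball] at hz'
  refine ⟨k, hk, fun i => if i = k then z' else c i, ?_, ?_, ?_⟩
  · show (if 0 = k then z' else c 0) = a
    rw [if_neg (show ¬ 0 = k from by omega), hc0]
  · show (if k = k then z' else c k) = z'
    rw [if_pos rfl]
  · intro i hi
    show dist (h (if i = k then z' else c i)) (if i + 1 = k then z' else c (i+1)) < δ
    rw [if_neg (show ¬ i = k from by omega)]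
    by_cases hik : i + 1 = k
    · rw [if_pos hik]
      have hik' : i = k - 1 := by omega
      calc dist (h (c i)) z' ≤ dist (h (c i)) z + dist z z' := dist_triangle _ _ _
      _ < δ := by
          rw [hik']
          rw [dist_comm] at hz'
          linarith
    · rw [if_neg hik]
      exact hch i hi

lemma SChain_trap {h : X → X} (hcont : Continuous h) {δ : ℝ} (hδ : 0 < δ) (a : X)
    {z : X} (hz : z ∈ closure (SChain h δ a)) : h z ∈ SChain h δ a := by
  obtain ⟨r, hr, hcr⟩ := Metric.continuous_iff.mp hcont z δ hδ
  obtain ⟨z', hz'mem, hz'd⟩ := Metric.mem_closure_iff.mp hz r hr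
  obtain ⟨k, hk, c, hc0, hck, hch⟩ := hz'mem
  refine ⟨k+1, by omega, fun i => if i = k+1 then h z else c i, ?_, ?_, ?_⟩
  · show (if 0 = k+1 then h z else c 0) = a
    rw [if_neg (show ¬ 0 = k + 1 from by omega), hc0]
  · show (if k+1 = k+1 then h z else c (k+1)) = h z
    rw [if_pos rfl]
  · intro i hi
    show dist (h (if i = k+1 then h z else c i)) (if i + 1 = k+1 then h z else c (i+1)) < δ
    rw [if_neg (show ¬ i = k + 1 from by omega)]
    by_cases hik : i + 1 = k + 1
    · rw [if_pos hik]
      have hik' : i = k := by omega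
      subst hik'
      rw [hck]
      exact hcr z' (by rw [dist_comm]; exact hz'd)
    · rw [if_neg hik]
      exact hch i (by omega)

lemma mem_SChain_of_reach {h : X → X} {δ : ℝ} (hδ : 0 < δ) {a z : X}
    (hr : ChainReach h a z) : z ∈ SChain h δ a := by
  obtain ⟨k, hk, c, hc0, hck, hch⟩ := hr (δ/2) (by positivity)
  exact ⟨k, hk, c, hc0, hck, fun i hi => lt_of_le_of_lt (hch i hi) (by linarith)⟩

lemma SChain_mono {h : X → X} {δ δ' : ℝ} (hle : δ ≤ δ') (a : X) :
    SChain h δ a ⊆ SChain h δ' a := by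
  rintro z ⟨k, hk, c, hc0, hck, hch⟩
  exact ⟨k, hk, c, hc0, hck, fun i hi => lt_of_lt_of_le (hch i hi) hle⟩

end Aux2

section Inv
variable [MetricSpace X] [CompactSpace X]
lemma chainClass_invariance (f : X ≃ₜ X) {x₀ w : X} (hrec : ChainReach ⇑f x₀ x₀)
    (h1 : ChainReach ⇑f w w) (h2 : ChainReach ⇑f x₀ w) (h3 : ChainReach ⇑f w x₀) :
    (ChainReach ⇑f (f w) (f w) ∧ ChainReach ⇑f x₀ (f w) ∧ ChainReach ⇑f (f w) x₀) ∧
    (ChainReach ⇑f (f.symm w) (f.symm w) ∧ ChainReach ⇑f x₀ (f.symm w) ∧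
      ChainReach ⇑f (f.symm w) x₀) := by
  have hfw_x₀ : ChainReach ⇑f (f w) x₀ :=
    reach_concat (reach_map f.continuous h3) (reach_apply_self f.continuous hrec)
  have hx₀_fw : ChainReach ⇑f x₀ (f w) := reach_concat h2 (reach_apply ⇑f w)
  have hsymm_w_w : ChainReach ⇑f (f.symm w) w := by
    have := reach_apply ⇑f (f.symm w)
    rwa [f.apply_symm_apply] at this
  have hsymm_w_x₀ : ChainReach ⇑f (f.symm w) x₀ := reach_concat hsymm_w_w h3
  have hgx₀ : ChainReach ⇑f.symm x₀ x₀ := reach_symm f hrec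
  have hgwx₀ : ChainReach ⇑f.symm w x₀ := reach_symm f h2
  have hg3 : ChainReach ⇑f.symm (f.symm w) x₀ :=
    reach_concat (reach_map f.symm.continuous hgwx₀)
      (reach_apply_self f.symm.continuous hgx₀)
  have hx₀_symm_w : ChainReach ⇑f x₀ (f.symm w) := by
    have h := reach_symm f.symm hg3
    rwa [Homeomorph.symm_symm] at h
  exact ⟨⟨reach_concat hfw_x₀ hx₀_fw, hx₀_fw, hfw_x₀⟩,
    ⟨reach_concat hsymm_w_x₀ hx₀_symm_w, hx₀_symm_w, hsymm_w_x₀⟩⟩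
end Inv

theorem stmt17 [MetricSpace X] [CompactSpace X] (f : X ≃ₜ X)
    (hsh : ShadowsOn (⇑f) Set.univ)
    (C : Set X) (hC : IsChainComponent (⇑f) C) :
    ¬ InitialStable (⇑f) C ↔
      ∃ Λ : Set X, IsAttractor (⇑f) Λ ∧ C ⊆ frontier Λ := by
  obtain ⟨x₀, hx₀rec, hCdef⟩ := hC
  have hmemC : ∀ w, w ∈ C ↔
      (ChainReach ⇑f w w ∧ ChainReach ⇑f x₀ w ∧ ChainReach ⇑f w x₀) := by
    intro w; rw [hCdef]; exact Iff.rfl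
  have hx₀C : x₀ ∈ C := (hmemC x₀).mpr ⟨hx₀rec, hx₀rec, hx₀rec⟩
  have hCinv : ∀ w ∈ C, f w ∈ C ∧ f.symm w ∈ C := by
    intro w hw
    obtain ⟨h1, h2, h3⟩ := (hmemC w).mp hw
    obtain ⟨ha, hb⟩ := chainClass_invariance f hx₀rec h1 h2 h3
    exact ⟨(hmemC _).mpr ha, (hmemC _).mpr hb⟩
  have hCiter : ∀ w ∈ C, ∀ n : ℕ, (⇑f)^[n] w ∈ C ∧ (⇑f.symm)^[n] w ∈ C := by
    intro w hw n
    induction n with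
    | zero => exact ⟨hw, hw⟩
    | succ n ih =>
      rw [Function.iterate_succ_apply', Function.iterate_succ_apply']
      exact ⟨(hCinv _ ih.1).1, (hCinv _ ih.2).2⟩
  have hinv_iter : ∀ (n : ℕ) (z : X), (⇑f)^[n] ((⇑f.symm)^[n] z) = z := by
    intro n
    induction n with
    | zero => intro z; simp
    | succ n ih =>
      intro z
      rw [Function.iterate_succ_apply (⇑f.symm), Function.iterate_succ_apply' (⇑f),
        ih (f.symm z), f.apply_symm_apply]
  constructor
  · -- not initial stable → attractor with C ⊆ ∂Λ
    intro hni
    rw [InitialStable] at hni; push_neg at hni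
    obtain ⟨x, hxC, y, hyx, hyC⟩ := hni
    have hyx₀ : ChainReach ⇑f y x₀ := reach_concat hyx ((hmemC x).mp hxC).2.2
    have hnx₀y : ¬ ChainReach ⇑f x₀ y := by
      intro hx₀y
      exact hyC ((hmemC y).mpr ⟨reach_concat hyx₀ hx₀y, hx₀y, hyx₀⟩)
    rw [ChainReach] at hnx₀y; push_neg at hnx₀y
    obtain ⟨δ₀, hδ₀, h0⟩ := hnx₀y
    set δ : ℝ := δ₀ / 2 with hδdef
    have hδpos : 0 < δ := by positivity
    set U : Set X := SChain ⇑f δ x₀ with hUdef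
    have hCU : C ⊆ U := fun w hw => mem_SChain_of_reach hδpos ((hmemC w).mp hw).2.1
    have htrap : ⇑f '' closure U ⊆ U := by
      rintro _ ⟨z, hz, rfl⟩
      exact SChain_trap f.continuous hδpos x₀ hz
    set Λ : Set X := ⋂ i : ℕ, (⇑f)^[i] '' U with hΛdef
    have hsub1 : ∀ i : ℕ, (⇑f)^[i+1] '' closure U ⊆ (⇑f)^[i] '' U := by
      intro i
      rw [Function.iterate_succ, Set.image_comp]
      exact Set.image_mono htrap
    have hΛcl : Λ = ⋂ i : ℕ, (⇑f)^[i] '' closure U := by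
      apply Set.Subset.antisymm
      · exact Set.iInter_mono fun i => Set.image_mono subset_closure
      · intro z hz
        rw [Set.mem_iInter] at hz
        rw [hΛdef, Set.mem_iInter]
        intro i
        exact hsub1 i (hz (i+1))
    have hΛclosed : IsClosed Λ := by
      rw [hΛcl]
      exact isClosed_iInter fun i =>
        ((isClosed_closure.isCompact).image (f.continuous.iterate i)).isClosed
    have hanti : ∀ i : ℕ, (⇑f)^[i+1] '' closure U ⊆ (⇑f)^[i] '' closure U :=
      fun i => (hsub1 i).trans (Set.image_mono subset_closure)
    have hfΛ : ⇑f '' Λ = Λ := by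
      rw [hΛcl, Set.image_iInter f.bijective]
      have he : ∀ i : ℕ, ⇑f '' ((⇑f)^[i] '' closure U) = (⇑f)^[i+1] '' closure U := by
        intro i
        rw [Function.iterate_succ', Set.image_comp]
      rw [iInter_congr he]
      apply Set.Subset.antisymm
      · intro z hz
        rw [Set.mem_iInter] at hz ⊢
        intro i
        rcases i with _ | i
        · exact hanti 0 (hz 0)
        · exact hz i
      · intro z hz
        rw [Set.mem_iInter] at hz ⊢
        intro i
        exact hz (i+1)
    have hΛiter : ∀ k : ℕ, (⇑f)^[k] '' Λ = Λ := by
      intro k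
      induction k with
      | zero => simp
      | succ k ih => rw [Function.iterate_succ', Set.image_comp, ih, hfΛ]
    have hCΛ : C ⊆ Λ := by
      intro w hw
      rw [hΛdef, Set.mem_iInter]
      intro i
      exact ⟨(⇑f.symm)^[i] w, hCU ((hCiter w hw i).2), hinv_iter i w⟩
    refine ⟨Λ, ⟨hΛclosed, hfΛ, U, SChain_open _ _ _, htrap, hΛdef⟩, ?_⟩
    intro w hw
    rw [hΛclosed.frontier_eq]
    refine ⟨hCΛ hw, fun hint => ?_⟩
    obtain ⟨ε, hε, hball⟩ := Metric.mem_nhds_iff.mp (mem_interior_iff_mem_nhds.mp hint)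
    have hminpos : (0:ℝ) < min ε δ₀ := lt_min hε hδ₀
    set ε₁ : ℝ := min ε δ₀ / 2 with hε₁def
    have hε₁pos : 0 < ε₁ := by positivity
    obtain ⟨δs, hδs, hshad⟩ := hsh ε₁ hε₁pos
    obtain ⟨k, hk, c, hc0, hck, hch⟩ :=
      (reach_concat hyx₀ ((hmemC w).mp hw).2.1 : ChainReach ⇑f y w) δs hδs
    obtain ⟨p, hp⟩ := hshad k c (fun i _ => Set.mem_univ _) hch
    have hp0 : dist y p ≤ ε₁ := by
      have := hp 0 (Nat.zero_le k)
      rwa [hc0, Function.iterate_zero_apply] at this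
    have hpk : (⇑f)^[k] p ∈ ball w ε := by
      have h1 := hp k le_rfl
      rw [hck] at h1
      rw [mem_ball, dist_comm]
      calc dist w ((⇑f)^[k] p) ≤ ε₁ := h1
      _ < ε := by
          have : min ε δ₀ ≤ ε := min_le_left _ _
          rw [hε₁def]; linarith
    have hpΛ : p ∈ Λ := by
      have h1 : (⇑f)^[k] p ∈ Λ := hball hpk
      rw [← hΛiter k] at h1
      obtain ⟨q, hq, hqe⟩ := h1
      rwa [← f.injective.iterate k hqe]
    have hpU : p ∈ U := by
      rw [hΛdef, Set.mem_iInter] at hpΛ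
      have h1 := hpΛ 0
      simpa using h1
    obtain ⟨k', hk', c', hc'0, hc'k, hch'⟩ := hpU
    refine h0 k' hk' (fun i => if i = k' then y else c' i) ?_ ?_ ?_
    · show (if 0 = k' then y else c' 0) = x₀
      rw [if_neg (show ¬ 0 = k' from by omega), hc'0]
    · show (if k' = k' then y else c' k') = y
      rw [if_pos rfl]
    · intro i hi
      show dist (⇑f (if i = k' then y else c' i)) (if i + 1 = k' then y else c' (i+1)) ≤ δ₀
      rw [if_neg (show ¬ i = k' from by omega)]
      by_cases hik : i + 1 = k'
      · rw [if_pos hik]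
        have h1 : dist (⇑f (c' i)) p < δ := by
          have := hch' i hi
          rwa [hik, hc'k] at this
        have h2 : dist p y ≤ ε₁ := by rw [dist_comm]; exact hp0
        have h3 : ε₁ ≤ δ₀ / 2 := by
          have : min ε δ₀ ≤ δ₀ := min_le_right _ _
          rw [hε₁def]; linarith
        calc dist (⇑f (c' i)) y ≤ dist (⇑f (c' i)) p + dist p y := dist_triangle _ _ _
        _ ≤ δ₀ := by rw [hδdef] at h1; linarith
      · rw [if_neg hik]
        have := hch' i hi
        rw [hδdef] at this
        linarith [this]
  · -- attractor with C ⊆ ∂Λ → not initial stable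
    rintro ⟨Λ, ⟨hΛclosed, hfΛ, U, hUopen, hUtrap, hΛdef⟩, hCfr⟩ hInit
    have hΛU : Λ ⊆ U := by
      rw [hΛdef]
      intro z hz
      rw [Set.mem_iInter] at hz
      simpa using hz 0
    have hCΛ : C ⊆ Λ := hCfr.trans (frontier_subset_iff_isClosed.mpr hΛclosed)
    set V : ℝ → Set X := fun δ => SChain ⇑f.symm δ x₀ with hVdef
    have hCV : ∀ δ : ℝ, 0 < δ → C ⊆ V δ := by
      intro δ hδ w hw
      exact mem_SChain_of_reach hδ (reach_symm f ((hmemC w).mp hw).2.2)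
    have hVtrap : ∀ δ : ℝ, 0 < δ → ∀ z ∈ closure (V δ), f.symm z ∈ V δ :=
      fun δ hδ z hz => SChain_trap f.symm.continuous hδ x₀ hz
    set K : ℝ → ℕ → Set X := fun δ n => (⇑f)^[n] ⁻¹' closure (V δ) with hKdef
    set O : ℝ → ℕ → Set X := fun δ n => (⇑f)^[n] ⁻¹' (V δ) with hOdef
    have hOK : ∀ δ (n : ℕ), O δ n ⊆ K δ n := fun δ n => Set.preimage_mono subset_closure
    have hKO : ∀ δ : ℝ, 0 < δ → ∀ n : ℕ, K δ (n+1) ⊆ O δ n := by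
      intro δ hδ n z hz
      have h1 : f.symm ((⇑f)^[n+1] z) ∈ V δ := hVtrap δ hδ _ hz
      have h2 : f.symm ((⇑f)^[n+1] z) = (⇑f)^[n] z := by
        rw [Function.iterate_succ_apply' (⇑f), f.symm_apply_apply]
      rw [hOdef]
      show (⇑f)^[n] z ∈ V δ
      rwa [h2] at h1
    have hKclosed : ∀ δ (n : ℕ), IsClosed (K δ n) :=
      fun δ n => isClosed_closure.preimage (f.continuous.iterate n)
    set L : ℝ → Set X := fun δ => ⋂ n : ℕ, K δ n with hLdef
    have hLclosed : ∀ δ, IsClosed (L δ) := fun δ => isClosed_iInter (hKclosed δ)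
    have hCL : ∀ δ : ℝ, 0 < δ → C ⊆ L δ := by
      intro δ hδ w hw
      rw [hLdef]
      refine Set.mem_iInter.mpr fun n => hOK δ n ?_
      show (⇑f)^[n] w ∈ V δ
      exact hCV δ hδ ((hCiter w hw n).1)
    -- the quasi-repeller ⋂ L(1/(m+1)) is inside C
    have hLC : (⋂ m : ℕ, L (1/(m+1))) ⊆ C := by
      intro z hz
      rw [Set.mem_iInter] at hz
      have hreach : ChainReach ⇑f.symm x₀ z := by
        intro δ hδ
        obtain ⟨m, hm⟩ := exists_nat_one_div_lt hδ
        have hmpos : (0:ℝ) < 1/(m+1) := by positivity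
        have hzm : z ∈ V (1/(m+1)) := by
          have h1 := Set.mem_iInter.mp (hz m) 1
          have h2 := hKO _ hmpos 0 h1
          simpa [hOdef] using h2
        obtain ⟨k, hk, c, hc0, hck, hch⟩ := hzm
        exact ⟨k, hk, c, hc0, hck, fun i hi => ((hch i hi).trans hm).le⟩
      have hzx₀ : ChainReach ⇑f z x₀ := by
        have h := reach_symm f.symm hreach
        rwa [Homeomorph.symm_symm] at h
      exact hInit x₀ hx₀C z hzx₀
    have hLmono : ∀ m1 m2 : ℕ, m1 ≤ m2 → L (1/(m2+1)) ⊆ L (1/(m1+1)) := by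
      intro m1 m2 h
      have hdle : (1:ℝ)/(m2+1) ≤ 1/(m1+1) := by
        apply one_div_le_one_div_of_le
        · positivity
        · have : (m1:ℝ) ≤ m2 := by exact_mod_cast h
          linarith
      exact iInter_mono fun n => Set.preimage_mono (closure_mono (SChain_mono hdle x₀))
    have hLdir : Directed (· ⊇ ·) (fun m : ℕ => L (1/(m+1))) := fun m1 m2 =>
      ⟨max m1 m2, hLmono m1 _ (le_max_left _ _), hLmono m2 _ (le_max_right _ _)⟩
    obtain ⟨m, hm⟩ := exists_subset_nhds_of_isCompact' hLdir
      (fun m => (hLclosed _).isCompact) (fun m => hLclosed _)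
      (fun x hx => hUopen.mem_nhds (hΛU (hCΛ (hLC hx))))
    set δ : ℝ := 1/(m+1) with hδdef
    have hδpos : 0 < δ := by positivity
    -- second compactness: get N with K δ N ⊆ U
    have hKanti : Antitone (K δ) :=
      antitone_nat_of_succ_le fun n => (hKO δ hδpos n).trans (hOK δ n)
    have hKdir : Directed (· ⊇ ·) (K δ) := fun n1 n2 =>
      ⟨max n1 n2, hKanti (le_max_left _ _), hKanti (le_max_right _ _)⟩
    obtain ⟨N, hN⟩ := exists_subset_nhds_of_isCompact' hKdir
      (fun n => (hKclosed δ n).isCompact) (hKclosed δ)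
      (fun x hx => hUopen.mem_nhds (hm hx))
    have hx₀W : x₀ ∈ O δ N := by
      show (⇑f)^[N] x₀ ∈ V δ
      exact hCV δ hδpos ((hCiter x₀ hx₀C N).1)
    have hWtrap : ∀ v ∈ O δ N, f.symm v ∈ O δ N := by
      intro v hv
      have hcomm : (⇑f)^[N] (f.symm v) = f.symm ((⇑f)^[N] v) := by
        apply f.injective
        rw [f.apply_symm_apply, ← Function.iterate_succ_apply' (⇑f) N (f.symm v),
          Function.iterate_succ_apply (⇑f) N (f.symm v), f.apply_symm_apply]
      show (⇑f)^[N] (f.symm v) ∈ V δ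
      rw [hcomm]
      exact hVtrap δ hδpos _ (subset_closure hv)
    have hWit : ∀ v ∈ O δ N, ∀ i : ℕ, (⇑f.symm)^[i] v ∈ O δ N := by
      intro v hv i
      induction i with
      | zero => exact hv
      | succ i ih =>
        rw [Function.iterate_succ_apply' (⇑f.symm)]
        exact hWtrap _ ih
    have hWΛ : O δ N ⊆ Λ := by
      intro v hv
      rw [hΛdef, Set.mem_iInter]
      intro i
      exact ⟨(⇑f.symm)^[i] v, hN (hOK δ N (hWit v hv i)), hinv_iter i v⟩
    have hWopen : IsOpen (O δ N) := (SChain_open _ _ _).preimage (f.continuous.iterate N)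
    have hx₀int : x₀ ∈ interior Λ := mem_interior.mpr ⟨O δ N, hWΛ, hWopen, hx₀W⟩
    have hfr := hCfr hx₀C
    rw [hΛclosed.frontier_eq] at hfr
    exact hfr.2 hx₀int
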